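/- Let k be a real number with k² = 1/3, let I ⊆ ℝ be an interval, and let (θ, α): I → ℝ² be a C¹ solution of the system dθ/ds = kα(kθ − 1) + θ((θ + k)² − (1 + k²)), dα/ds = α((θ + k)² + (1 − k²)(1 − α)). If α(s₀) < 0 for some s₀ ∈ I, then α(s) < 0 for all s ∈ I, and α'(s) < 0 for all s ∈ I (so α is strictly decreasing on I). -/

import Mathlib

/-!
Along a solution, `α' = α · f` with `f = (θ + k)² + (1 - k²)(1 - α)` continuous, so the
integrating factor gives `α(s) = α(s₀) · exp (∫_{s₀}^{s} f)`: the sign of `α` never changes.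
Once `α < 0`, the factor `f` is positive because `1 - k² > 0`, hence `α' = α f < 0`.
-/

open Set Real intervalIntegral

theorem eq_mul_exp_integral_of_hasDerivAt_mul {u f : ℝ → ℝ} {a b : ℝ} (hab : a ≤ b)
    (hf : ContinuousOn f (Icc a b)) (hu : ∀ s ∈ Icc a b, HasDerivAt u (u s * f s) s) :
    ∀ s ∈ Icc a b, u s = u a * exp (∫ x in a..s, f x) := by
  -- `f` is only continuous on `[a, b]`; its extension by constants is continuous everywhere.
  set g := IccExtend hab ((Icc a b).domRestrict f)
  have hg : Continuous g := hf.domRestrict.Icc_extend'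
  have hgf : EqOn g f (Icc a b) := fun s hs => IccExtend_of_mem hab _ hs
  have hderiv : ∀ s ∈ Icc a b,
      HasDerivAt (fun t => u t * exp (-∫ x in a..t, g x)) 0 s := by
    intro s hs
    have hfactor : HasDerivAt (fun t => exp (-∫ x in a..t, g x))
        (exp (-∫ x in a..s, g x) * -f s) s := by
      rw [← hgf hs]
      exact (hg.integral_hasStrictDerivAt a s).hasDerivAt.neg.exp
    exact ((hu s hs).mul hfactor).congr_deriv (by ring)
  have hconst := constant_of_has_deriv_right_zero
    (fun s hs => (hderiv s hs).continuousAt.continuousWithinAt)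
    (fun s hs => (hderiv s (Ico_subset_Icc_self hs)).hasDerivWithinAt)
  intro s hs
  have hint : ∫ x in a..s, g x = ∫ x in a..s, f x :=
    integral_congr (hgf.mono (uIcc_subset_Icc (left_mem_Icc.2 hab) hs))
  have hs_eq := hconst s hs
  rw [integral_same, neg_zero, exp_zero, mul_one, hint] at hs_eq
  rw [← hs_eq, mul_assoc, ← exp_add, neg_add_cancel, exp_zero, mul_one]

theorem neg_of_hasDerivAt_mul_of_neg {I : Set ℝ} (hI : I.OrdConnected) {u f : ℝ → ℝ}
    (hf : ContinuousOn f I) (hu : ∀ s ∈ I, HasDerivAt u (u s * f s) s)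
    {s₀ : ℝ} (hs₀ : s₀ ∈ I) (hneg : u s₀ < 0) : ∀ s ∈ I, u s < 0 := by
  intro s hs
  have hsub : Icc (min s₀ s) (max s₀ s) ⊆ I := hI.uIcc_subset hs₀ hs
  have hformula := eq_mul_exp_integral_of_hasDerivAt_mul min_le_max (hf.mono hsub)
    (fun t ht => hu t (hsub ht))
  have hs₀_eq := hformula s₀ ⟨min_le_left _ _, le_max_left _ _⟩
  have hs_eq := hformula s ⟨min_le_right _ _, le_max_right _ _⟩
  have hmin : u (min s₀ s) < 0 := by
    rw [hs₀_eq] at hneg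
    exact neg_of_mul_neg_left hneg (exp_pos _).le
  rw [hs_eq]
  exact mul_neg_of_neg_of_pos hmin (exp_pos _)

theorem alpha_negative_and_decreasing (k : ℝ) (hk : k ^ 2 = 1 / 3)
    (I : Set ℝ) (hI : I.OrdConnected) (θ α : ℝ → ℝ)
    (hθ : ∀ s ∈ I, HasDerivAt θ
      (k * α s * (k * θ s - 1) + θ s * ((θ s + k) ^ 2 - (1 + k ^ 2))) s)
    (hα : ∀ s ∈ I, HasDerivAt α
      (α s * ((θ s + k) ^ 2 + (1 - k ^ 2) * (1 - α s))) s)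
    (s₀ : ℝ) (hs₀ : s₀ ∈ I) (hneg : α s₀ < 0) :
    (∀ s ∈ I, α s < 0) ∧
    (∀ s ∈ I, α s * ((θ s + k) ^ 2 + (1 - k ^ 2) * (1 - α s)) < 0) ∧
    StrictAntiOn α I := by
  have hf : ContinuousOn (fun s => (θ s + k) ^ 2 + (1 - k ^ 2) * (1 - α s)) I := by
    intro s hs
    have := (hθ s hs).continuousAt
    have := (hα s hs).continuousAt
    exact (by fun_prop : ContinuousAt _ s).continuousWithinAt
  have hα_neg := neg_of_hasDerivAt_mul_of_neg hI hf hα hs₀ hneg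
  have hα'_neg : ∀ s ∈ I, α s * ((θ s + k) ^ 2 + (1 - k ^ 2) * (1 - α s)) < 0 := by
    intro s hs
    have hα_s := hα_neg s hs
    exact mul_neg_of_neg_of_pos hα_s (by nlinarith [sq_nonneg (θ s + k)])
  refine ⟨hα_neg, hα'_neg, ?_⟩
  exact strictAntiOn_of_hasDerivWithinAt_neg hI.convex
    (fun s hs => (hα s hs).continuousAt.continuousWithinAt)
    (fun s hs => (hα s (interior_subset hs)).hasDerivWithinAt)
    (fun s hs => hα'_neg s (interior_subset hs))
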